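/- (Norm of a composite representation, exact form of the χ_ρ–ρ relationship.) Let d ρ : ℕ, μ : ℝ, v : ℝ≥0 with v ≠ 0. Let X Y : Fin ρ → Ω → (Fin d → ℝ) be families of random vectors on a probability space such that all 2ρd coordinate random variables {X j i} ∪ {Y j i} are mutually independent and each has law Ω(μ, v). Let χ = ∑ j, (X j * Y j) be the composite representation (sum of elementwise products). Then E[∑ i, (χ i)^2] = ρ * d * (μ^2 + v)^2; in particular, with v = 1/d the root expected squared norm is √(ρ·d)·(μ² + 1/d), matching the approximation ‖χ_ρ‖₂ ≈ μ²√(ρ·d). -/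

import Mathlib

open MeasureTheory ProbabilityTheory

open Real

section GaussAux

lemma aux_odd (b : ℝ) : ∫ x : ℝ, x * Real.exp (-b * x ^ 2) = 0 := by
  set f : ℝ → ℝ := fun x => x * Real.exp (-b * x ^ 2) with hf
  have h1 : ∫ x : ℝ, f (-x) = ∫ x : ℝ, f x :=
    (Measure.measurePreserving_neg (volume : Measure ℝ)).integral_comp
      (Homeomorph.neg ℝ).measurableEmbedding f
  have h2 : ∀ x : ℝ, f (-x) = - f x := by
    intro x; simp only [hf]; ring_nf
  rw [funext h2] at h1
  simp only [integral_neg] at h1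
  linarith

lemma aux_even_int (f : ℝ → ℝ) (hint : Integrable f) (heven : ∀ x, f (-x) = f x) :
    ∫ x : ℝ, f x = 2 * ∫ x in Set.Ioi (0:ℝ), f x := by
  have hsplit := integral_add_compl (measurableSet_Ioi (a := (0:ℝ))) hint
  rw [Set.compl_Ioi] at hsplit
  have hneg : ∫ x in Set.Ioi (0:ℝ), f (-x) = ∫ x in Set.Iic (-(0:ℝ)), f x :=
    integral_comp_neg_Ioi 0 f
  simp only [neg_zero] at hneg
  rw [funext heven] at hneg
  linarith

lemma aux_sq {b : ℝ} (hb : 0 < b) :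
    ∫ x : ℝ, x ^ 2 * Real.exp (-b * x ^ 2) = b ^ (-(3:ℝ)/2) * Real.sqrt π / 2 := by
  have hint : Integrable (fun x : ℝ => x ^ 2 * Real.exp (-b * x ^ 2)) := by
    have := integrable_rpow_mul_exp_neg_mul_sq hb (s := 2) (by norm_num)
    simpa [Real.rpow_two] using this
  rw [aux_even_int _ hint (by intro x; ring_nf)]
  have h1 : ∫ x in Set.Ioi (0:ℝ), x ^ 2 * Real.exp (-b * x ^ 2)
      = ∫ x in Set.Ioi (0:ℝ), x ^ (2:ℝ) * Real.exp (-b * x ^ (2:ℝ)) := by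
    refine setIntegral_congr_fun measurableSet_Ioi (fun x _ => ?_)
    rw [Real.rpow_two]
  rw [h1, integral_rpow_mul_exp_neg_mul_rpow (by norm_num) (by norm_num) hb]
  have h2 : ((2:ℝ) + 1) / 2 = 1/2 + 1 := by norm_num
  rw [h2, Real.Gamma_add_one (by norm_num), Real.Gamma_one_half_eq]
  ring_nf

end GaussAux

section GaussMoments

variable {m : ℝ} {v : NNReal}

lemma gauss_integral (hv : v ≠ 0) (f : ℝ → ℝ) :
    ∫ x, f x ∂(gaussianReal m v) = ∫ x, gaussianPDFReal m v x * f x := by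
  rw [gaussianReal_of_var_ne_zero _ hv, gaussianPDF_def]
  have h : (fun x => ENNReal.ofReal (gaussianPDFReal m v x))
      = fun x => ((gaussianPDFReal m v x).toNNReal : ENNReal) := rfl
  rw [h, integral_withDensity_eq_integral_smul
    (measurable_gaussianPDFReal m v).real_toNNReal f]
  congr 1
  ext x
  rw [NNReal.smul_def, Real.coe_toNNReal _ (gaussianPDFReal_nonneg m v x)]
  rfl

lemma gauss_integrable (hv : v ≠ 0) (f : ℝ → ℝ) :
    Integrable f (gaussianReal m v)
      ↔ Integrable (fun x => gaussianPDFReal m v x * f x) := by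
  rw [gaussianReal_of_var_ne_zero _ hv, gaussianPDF_def]
  have h : (fun x => ENNReal.ofReal (gaussianPDFReal m v x))
      = fun x => ((gaussianPDFReal m v x).toNNReal : ENNReal) := rfl
  rw [h, integrable_withDensity_iff_integrable_smul
    (measurable_gaussianPDFReal m v).real_toNNReal]
  constructor <;> intro hi <;> refine hi.congr (Filter.Eventually.of_forall fun x => ?_) <;>
    simp [NNReal.smul_def, Real.coe_toNNReal _ (gaussianPDFReal_nonneg m v x)]

lemma gauss_pdf_shift (x : ℝ) : gaussianPDFReal m v x = gaussianPDFReal 0 v (x - m) := by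
  simp [gaussianPDFReal]

lemma gauss_pdf0 (x : ℝ) :
    gaussianPDFReal 0 v x = (Real.sqrt (2 * π * v))⁻¹ * Real.exp (-(2 * (v:ℝ))⁻¹ * x ^ 2) := by
  rcases eq_or_ne v 0 with rfl | hv
  · simp [gaussianPDFReal]
  · have hv0 : (0:ℝ) < v := lt_of_le_of_ne v.2 (by exact_mod_cast hv.symm)
    simp only [gaussianPDFReal, sub_zero]
    congr 1
    field_simp

lemma gauss_int_poly (hv : v ≠ 0) :
    Integrable (fun x : ℝ => gaussianPDFReal 0 v x * x) ∧
    Integrable (fun x : ℝ => gaussianPDFReal 0 v x * x ^ 2) := by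
  have hv0 : (0:ℝ) < v := lt_of_le_of_ne v.2 (by exact_mod_cast hv.symm)
  have hb : (0:ℝ) < (2 * (v:ℝ))⁻¹ := by positivity
  constructor
  · have h := (integrable_mul_exp_neg_mul_sq hb).const_mul (Real.sqrt (2 * π * v))⁻¹
    refine h.congr (Filter.Eventually.of_forall fun x => ?_)
    simp only [gauss_pdf0]; ring
  · have h := (integrable_rpow_mul_exp_neg_mul_sq hb (s := 2) (by norm_num)).const_mul
      (Real.sqrt (2 * π * v))⁻¹
    refine h.congr (Filter.Eventually.of_forall fun x => ?_)
    simp only [gauss_pdf0, Real.rpow_two]; ring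

lemma gauss_sq_moment (hv : v ≠ 0) :
    ∫ x : ℝ, gaussianPDFReal 0 v x * x ^ 2 = (v : ℝ) := by
  have hv0 : (0:ℝ) < v := lt_of_le_of_ne v.2 (by exact_mod_cast hv.symm)
  have hb : (0:ℝ) < (2 * (v:ℝ))⁻¹ := by positivity
  have h1 : (fun x : ℝ => gaussianPDFReal 0 v x * x ^ 2)
      = fun x => (Real.sqrt (2 * π * v))⁻¹ * (x ^ 2 * Real.exp (-(2 * (v:ℝ))⁻¹ * x ^ 2)) := by
    ext x; rw [gauss_pdf0]; ring
  rw [h1, integral_const_mul, aux_sq hb]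
  -- algebra
  have h2v : (0:ℝ) < 2 * (v:ℝ) := by positivity
  have e1 : ((2 * (v:ℝ))⁻¹) ^ (-(3:ℝ)/2) = (2 * (v:ℝ)) ^ ((3:ℝ)/2) := by
    rw [Real.inv_rpow h2v.le, ← Real.rpow_neg h2v.le]
    norm_num
  rw [e1]
  have e2 : (2 * (v:ℝ)) ^ ((3:ℝ)/2) = (2 * (v:ℝ)) * Real.sqrt (2 * (v:ℝ)) := by
    rw [Real.sqrt_eq_rpow, ← Real.rpow_one_add' (by positivity) (by norm_num)]
    norm_num
  have e3 : Real.sqrt (2 * π * (v:ℝ)) = Real.sqrt (2 * (v:ℝ)) * Real.sqrt π := by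
    rw [← Real.sqrt_mul (by positivity)]
    ring_nf
  rw [e2, e3]
  have hs : Real.sqrt (2 * (v:ℝ)) ≠ 0 := by positivity
  have hp : Real.sqrt π ≠ 0 := by positivity
  field_simp

end GaussMoments


/-- The MiND (Mixture of Normal Distributions) measure on `ℝ`:
the even mixture of Gaussians with means `-μ` and `μ` and variance `v`. -/
noncomputable def MiND (μ : ℝ) (v : NNReal) : Measure ℝ :=
  (1 / 2 : ENNReal) • gaussianReal (-μ) v + (1 / 2 : ENNReal) • gaussianReal μ v

section GaussMoments2

variable {m : ℝ} {v : NNReal}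

lemma gauss_shift_integral (f : ℝ → ℝ) :
    ∫ x : ℝ, gaussianPDFReal m v x * f x
      = ∫ y : ℝ, gaussianPDFReal 0 v y * f (y + m) := by
  have h := integral_add_right_eq_self (μ := (volume : Measure ℝ))
    (fun x => gaussianPDFReal m v x * f x) m
  rw [← h]
  congr 1
  ext y
  rw [gauss_pdf_shift, add_sub_cancel_right]

lemma gauss_int1 (hv : v ≠ 0) : Integrable (fun x : ℝ => x) (gaussianReal m v) := by
  rw [gauss_integrable hv]
  have h : (fun x : ℝ => gaussianPDFReal m v x * x)
      = fun x => gaussianPDFReal 0 v (x - m) * ((x - m) + m) := by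
    ext x; rw [gauss_pdf_shift]; ring_nf
  rw [h]
  have h2 : Integrable (fun y : ℝ => gaussianPDFReal 0 v y * (y + m)) := by
    have := ((gauss_int_poly hv).1.add
      ((integrable_gaussianPDFReal 0 v).mul_const m))
    refine this.congr (Filter.Eventually.of_forall fun x => ?_)
    simp; ring
  exact h2.comp_sub_right m

lemma gauss_int2 (hv : v ≠ 0) : Integrable (fun x : ℝ => x ^ 2) (gaussianReal m v) := by
  rw [gauss_integrable hv]
  have h : (fun x : ℝ => gaussianPDFReal m v x * x ^ 2)
      = fun x => gaussianPDFReal 0 v (x - m) * (((x - m) + m) ^ 2) := by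
    ext x; rw [gauss_pdf_shift]; ring_nf
  rw [h]
  have h2 : Integrable (fun y : ℝ => gaussianPDFReal 0 v y * ((y + m) ^ 2)) := by
    have := (((gauss_int_poly hv).2.add
      (((gauss_int_poly hv).1.const_mul (2 * m)))).add
      ((integrable_gaussianPDFReal 0 v).mul_const (m ^ 2)))
    refine this.congr (Filter.Eventually.of_forall fun x => ?_)
    simp; ring
  exact h2.comp_sub_right m

lemma gauss_m1 (hv : v ≠ 0) : ∫ x, x ∂(gaussianReal m v) = m := by
  rw [gauss_integral hv, gauss_shift_integral]
  have hsplit : (fun y : ℝ => gaussianPDFReal 0 v y * (y + m))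
      = fun y => gaussianPDFReal 0 v y * y + (gaussianPDFReal 0 v y) * m := by
    ext y; ring
  rw [hsplit, integral_add (gauss_int_poly hv).1
    ((integrable_gaussianPDFReal 0 v).mul_const m), integral_mul_const,
    integral_gaussianPDFReal_eq_one 0 hv]
  have hodd : ∫ y : ℝ, gaussianPDFReal 0 v y * y = 0 := by
    have h1 : (fun y : ℝ => gaussianPDFReal 0 v y * y)
        = fun y => (Real.sqrt (2 * π * v))⁻¹ * (y * Real.exp (-(2 * (v:ℝ))⁻¹ * y ^ 2)) := by
      ext y; rw [gauss_pdf0]; ring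
    rw [h1, integral_const_mul, aux_odd]
    ring
  rw [hodd]; ring

lemma gauss_m2 (hv : v ≠ 0) : ∫ x, x ^ 2 ∂(gaussianReal m v) = m ^ 2 + (v : ℝ) := by
  rw [gauss_integral hv, gauss_shift_integral]
  have hodd : ∫ y : ℝ, gaussianPDFReal 0 v y * y = 0 := by
    have h1 : (fun y : ℝ => gaussianPDFReal 0 v y * y)
        = fun y => (Real.sqrt (2 * π * v))⁻¹ * (y * Real.exp (-(2 * (v:ℝ))⁻¹ * y ^ 2)) := by
      ext y; rw [gauss_pdf0]; ring
    rw [h1, integral_const_mul, aux_odd]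
    ring
  have hsplit : (fun y : ℝ => gaussianPDFReal 0 v y * (y + m) ^ 2)
      = fun y => (gaussianPDFReal 0 v y * y ^ 2 + (2 * m) * (gaussianPDFReal 0 v y * y))
          + (gaussianPDFReal 0 v y) * m ^ 2 := by
    ext y; ring
  rw [hsplit]
  have hadd : Integrable (fun y : ℝ => gaussianPDFReal 0 v y * y ^ 2
      + 2 * m * (gaussianPDFReal 0 v y * y)) := by
    exact (gauss_int_poly hv).2.add ((gauss_int_poly hv).1.const_mul (2 * m))
  rw [integral_add hadd ((integrable_gaussianPDFReal 0 v).mul_const (m ^ 2))]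
  rw [integral_add (gauss_int_poly hv).2 ((gauss_int_poly hv).1.const_mul (2 * m)),
    integral_const_mul, integral_mul_const, integral_gaussianPDFReal_eq_one 0 hv,
    gauss_sq_moment hv, hodd]
  ring

end GaussMoments2

section MiNDMoments

variable {μ : ℝ} {v : NNReal}

lemma mind_int1 (hv : v ≠ 0) : Integrable (fun x : ℝ => x) (MiND μ v) := by
  unfold MiND
  exact ((gauss_int1 hv).smul_measure (by norm_num)).add_measure
    ((gauss_int1 hv).smul_measure (by norm_num))

lemma mind_int2 (hv : v ≠ 0) : Integrable (fun x : ℝ => x ^ 2) (MiND μ v) := by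
  unfold MiND
  exact ((gauss_int2 hv).smul_measure (by norm_num)).add_measure
    ((gauss_int2 hv).smul_measure (by norm_num))

lemma mind_m1 (hv : v ≠ 0) : ∫ x, x ∂(MiND μ v) = 0 := by
  unfold MiND
  rw [integral_add_measure ((gauss_int1 hv).smul_measure (by norm_num))
    ((gauss_int1 hv).smul_measure (by norm_num)),
    integral_smul_measure, integral_smul_measure, gauss_m1 hv, gauss_m1 hv]
  simp

lemma mind_m2 (hv : v ≠ 0) : ∫ x, x ^ 2 ∂(MiND μ v) = μ ^ 2 + (v : ℝ) := by
  unfold MiND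
  rw [integral_add_measure ((gauss_int2 hv).smul_measure (by norm_num))
    ((gauss_int2 hv).smul_measure (by norm_num)),
    integral_smul_measure, integral_smul_measure, gauss_m2 hv, gauss_m2 hv]
  have : ENNReal.toReal (1/2) = 1/2 := by simp
  rw [this]
  simp only [smul_eq_mul]
  ring

end MiNDMoments

/-- Norm of a composite representation: if all `2ρd` coordinates of the families `X j` and
`Y j` are mutually independent with common law `MiND μ v`, and `χ = ∑ j, X j ⊙ Y j` is the
composite representation, then `E[∑ i, (χ i)²] = ρ d (μ² + v)²`. -/
theorem stmt16 (d ρ : ℕ) (μ : ℝ) (v : NNReal) (hv : v ≠ 0)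
    {Ω : Type*} [MeasureSpace Ω] [IsProbabilityMeasure (volume : Measure Ω)]
    (X Y : Fin ρ → Ω → (Fin d → ℝ))
    (hmeas : ∀ j : (Fin ρ × Fin d) ⊕ (Fin ρ × Fin d),
      Measurable ((Sum.elim (fun p ω => X p.1 ω p.2) (fun p ω => Y p.1 ω p.2) :
        (Fin ρ × Fin d) ⊕ (Fin ρ × Fin d) → Ω → ℝ) j))
    (hindep : iIndepFun
      (Sum.elim (fun p ω => X p.1 ω p.2) (fun p ω => Y p.1 ω p.2) :
        (Fin ρ × Fin d) ⊕ (Fin ρ × Fin d) → Ω → ℝ) volume)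
    (hlaw : ∀ j : (Fin ρ × Fin d) ⊕ (Fin ρ × Fin d),
      Measure.map ((Sum.elim (fun p ω => X p.1 ω p.2) (fun p ω => Y p.1 ω p.2) :
        (Fin ρ × Fin d) ⊕ (Fin ρ × Fin d) → Ω → ℝ) j) volume = MiND μ v) :
    ∫ ω, (∑ i, ((∑ j, X j ω * Y j ω) i) ^ 2) = (ρ : ℝ) * d * (μ ^ 2 + (v : ℝ)) ^ 2 := by
  classical
  set Z : (Fin ρ × Fin d) ⊕ (Fin ρ × Fin d) → Ω → ℝ :=
    (Sum.elim (fun p ω => X p.1 ω p.2) (fun p ω => Y p.1 ω p.2)) with hZdef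
  have intZ : ∀ p, Integrable (Z p) (volume : Measure Ω) := by
    intro p
    have h := (integrable_map_measure (f := Z p) (g := fun x : ℝ => x)
      aestronglyMeasurable_id (hmeas p).aemeasurable).mp (by rw [hlaw p]; exact mind_int1 hv)
    exact h
  have intZsq : ∀ p, Integrable (fun ω => (Z p ω) ^ 2) (volume : Measure Ω) := by
    intro p
    have h := (integrable_map_measure (f := Z p) (g := fun x : ℝ => x ^ 2)
      ((measurable_id.pow_const 2).aestronglyMeasurable) (hmeas p).aemeasurable).mp
      (by rw [hlaw p]; exact mind_int2 hv)
    exact h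
  have EZ : ∀ p, ∫ ω, Z p ω = 0 := by
    intro p
    have h := integral_map (μ := (volume : Measure Ω)) (φ := Z p) (f := fun x : ℝ => x)
      (hmeas p).aemeasurable aestronglyMeasurable_id
    rw [hlaw p, mind_m1 hv] at h
    exact h.symm
  have EZ2 : ∀ p, ∫ ω, (Z p ω) ^ 2 = μ ^ 2 + (v : ℝ) := by
    intro p
    have h := integral_map (μ := (volume : Measure Ω)) (φ := Z p) (f := fun x : ℝ => x ^ 2)
      (hmeas p).aemeasurable ((measurable_id.pow_const 2).aestronglyMeasurable)
    rw [hlaw p, mind_m2 hv] at h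
    exact h.symm
  have hpair : ∀ p q, p ≠ q → IndepFun (Z p) (Z q) (volume : Measure Ω) :=
    fun p q h => hindep.indepFun h
  have hT : ∀ (i : Fin d) (j k : Fin ρ),
      Integrable (fun ω => (Z (.inl (j,i)) ω * Z (.inr (j,i)) ω)
          * (Z (.inl (k,i)) ω * Z (.inr (k,i)) ω)) (volume : Measure Ω) ∧
      ∫ ω, (Z (.inl (j,i)) ω * Z (.inr (j,i)) ω) * (Z (.inl (k,i)) ω * Z (.inr (k,i)) ω)
        = if j = k then (μ ^ 2 + (v : ℝ)) ^ 2 else 0 := by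
    intro i j k
    by_cases hjk : j = k
    · subst hjk
      have hne : (Sum.inl (j,i) : (Fin ρ × Fin d) ⊕ (Fin ρ × Fin d)) ≠ Sum.inr (j,i) := by simp
      have hisq : IndepFun (fun ω => (Z (.inl (j,i)) ω) ^ 2)
          (fun ω => (Z (.inr (j,i)) ω) ^ 2) (volume : Measure Ω) :=
        (hpair _ _ hne).comp (measurable_id.pow_const 2) (measurable_id.pow_const 2)
      have hint : Integrable ((fun ω => (Z (.inl (j,i)) ω) ^ 2)
          * (fun ω => (Z (.inr (j,i)) ω) ^ 2)) (volume : Measure Ω) :=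
        hisq.integrable_mul (intZsq _) (intZsq _)
      have hval := hisq.integral_mul_eq_mul_integral (intZsq _).aestronglyMeasurable (intZsq _).aestronglyMeasurable
      constructor
      · refine hint.congr (Filter.Eventually.of_forall fun ω => ?_)
        simp only [Pi.mul_apply]; ring
      · rw [if_pos rfl]
        have h1 : ∫ ω, (Z (.inl (j,i)) ω * Z (.inr (j,i)) ω)
              * (Z (.inl (j,i)) ω * Z (.inr (j,i)) ω)
            = ∫ ω, (Z (.inl (j,i)) ω) ^ 2 * (Z (.inr (j,i)) ω) ^ 2 := by
          congr 1; ext ω; ring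
        rw [h1]
        have h2 : ∫ ω, (Z (.inl (j,i)) ω) ^ 2 * (Z (.inr (j,i)) ω) ^ 2
            = (∫ ω, (Z (.inl (j,i)) ω) ^ 2) * ∫ ω, (Z (.inr (j,i)) ω) ^ 2 := hval
        rw [h2, EZ2, EZ2]
        ring
    · have h1 : (Sum.inl (j,i) : (Fin ρ × Fin d) ⊕ (Fin ρ × Fin d)) ≠ Sum.inl (k,i) := by
        simp [hjk]
      have hAC : IndepFun (Z (.inl (j,i)) * Z (.inr (j,i)))
          (Z (.inl (k,i)) * Z (.inr (k,i))) (volume : Measure Ω) :=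
        hindep.indepFun_mul_mul hmeas _ _ _ _ (by simp [hjk]) (by simp) (by simp) (by simp [hjk])
      have intA : Integrable (Z (.inl (j,i)) * Z (.inr (j,i))) (volume : Measure Ω) :=
        (hpair _ _ (by simp)).integrable_mul (intZ _) (intZ _)
      have intC : Integrable (Z (.inl (k,i)) * Z (.inr (k,i))) (volume : Measure Ω) :=
        (hpair _ _ (by simp)).integrable_mul (intZ _) (intZ _)
      have hint := hAC.integrable_mul intA intC
      constructor
      · exact hint
      · rw [if_neg hjk]
        have hval : ∫ ω, (Z (.inl (j,i)) ω * Z (.inr (j,i)) ω)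
              * (Z (.inl (k,i)) ω * Z (.inr (k,i)) ω)
            = (∫ ω, Z (.inl (j,i)) ω * Z (.inr (j,i)) ω)
              * ∫ ω, Z (.inl (k,i)) ω * Z (.inr (k,i)) ω :=
          hAC.integral_mul_eq_mul_integral intA.aestronglyMeasurable intC.aestronglyMeasurable
        have hvalA : ∫ ω, Z (.inl (j,i)) ω * Z (.inr (j,i)) ω
            = (∫ ω, Z (.inl (j,i)) ω) * ∫ ω, Z (.inr (j,i)) ω :=
          (hpair _ _ (by simp)).integral_mul_eq_mul_integral (intZ _).aestronglyMeasurable (intZ _).aestronglyMeasurable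
        rw [hval, hvalA, EZ]
        ring
  have hrw : ∀ ω : Ω, (∑ i, ((∑ j, X j ω * Y j ω) i) ^ 2)
      = ∑ i, ∑ j, ∑ k, (Z (.inl (j,i)) ω * Z (.inr (j,i)) ω)
          * (Z (.inl (k,i)) ω * Z (.inr (k,i)) ω) := by
    intro ω
    refine Finset.sum_congr rfl fun i _ => ?_
    rw [Finset.sum_apply]
    simp only [Pi.mul_apply]
    rw [sq, Finset.sum_mul_sum]
    rfl
  rw [integral_congr_ae (Filter.Eventually.of_forall hrw)]
  rw [integral_finset_sum _ (fun i _ => integrable_finset_sum _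
    (fun j _ => integrable_finset_sum _ (fun k _ => (hT i j k).1)))]
  have step2 : ∀ i : Fin d, ∫ ω, ∑ j, ∑ k, (Z (.inl (j,i)) ω * Z (.inr (j,i)) ω)
        * (Z (.inl (k,i)) ω * Z (.inr (k,i)) ω)
      = ∑ j : Fin ρ, ∑ k : Fin ρ, if j = k then (μ ^ 2 + (v : ℝ)) ^ 2 else 0 := by
    intro i
    rw [integral_finset_sum _ (fun j _ => integrable_finset_sum _ (fun k _ => (hT i j k).1))]
    refine Finset.sum_congr rfl fun j _ => ?_
    rw [integral_finset_sum _ (fun k _ => (hT i j k).1)]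
    exact Finset.sum_congr rfl fun k _ => (hT i j k).2
  refine (Finset.sum_congr rfl (fun i _ => step2 i)).trans ?_
  have hsum : ∀ j : Fin ρ, (∑ k : Fin ρ, if j = k then (μ ^ 2 + (v:ℝ)) ^ 2 else 0)
      = (μ ^ 2 + (v:ℝ)) ^ 2 := by
    intro j
    rw [Finset.sum_eq_single j (fun k _ hk => if_neg (fun h => hk h.symm)) (by simp),
      if_pos rfl]
  simp only [hsum, Finset.sum_const, Finset.card_univ, Fintype.card_fin, nsmul_eq_mul]
  ring
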